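/- arXiv:2509.22184 — 4 statements merged into one kernel-verified Lean document; each statement's English description precedes it below -/
import Mathlib

section
/- Let D = diag(d_1,…,d_{k-1},0,…,0) be an n×n diagonal matrix with d_1,…,d_{k-1} > 0 and k ≥ 2, and let y = a e_1 + b e_k for scalars a, b with a ≠ 0. Then the matrix A = E_{1,1} + d_1 a b E_{k,1} − d_1 a^2 E_{k,k} + Σ_{i≠1,k} E_{i,i} satisfies A^T D A = D and A y = a e_1. -/
/-!
Writing `A = 1 + E_{k,1} c - E_{k,k} (1 + e)` with `c = d₁ a b`, `e = d₁ a²`, the matrix `A`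
differs from the identity only in row `k`, which `D` kills because `d_k = 0`; hence `D A = D`,
and then `Aᵀ D A = Aᵀ D = (D A)ᵀ = D`. For the second claim, `A y = y + (c a - (1 + e) b) e_k`
and `c a - e b = 0`.
-/

open Matrix

section

variable {n α : Type*} [Fintype n]

lemma transpose_mul_mul_eq_of_mul_eq [CommSemiring α] {D A : Matrix n n α} (hD : D.IsSymm)
    (h : D * A = D) : Aᵀ * D * A = D :=
  calc Aᵀ * D * A = Aᵀ * D := by rw [Matrix.mul_assoc, h]
    _ = (D * A)ᵀ := by rw [transpose_mul, hD.eq]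
    _ = D := by rw [h, hD.eq]

variable [DecidableEq n]

lemma sum_filter_ne_ne_single_one [AddCommGroupWithOne α] {i₀ k : n} (h : i₀ ≠ k) :
    ∑ i ∈ Finset.univ.filter (fun i : n => i ≠ i₀ ∧ i ≠ k), single i i (1 : α)
      = 1 - single i₀ i₀ 1 - single k k 1 := by
  have hfilter : Finset.univ.filter (fun i : n => i ≠ i₀ ∧ i ≠ k) = Finset.univ \ {i₀, k} := by
    ext i; simp
  rw [hfilter, Finset.sum_sdiff_eq_sub (Finset.subset_univ _), sum_single_one,
    Finset.sum_pair h, sub_sub]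

lemma diagonal_mul_single_of_eq_zero [NonUnitalNonAssocSemiring α] {d : n → α} {k : n}
    (hk : d k = 0) (j : n) (x : α) : diagonal d * single k j x = 0 := by
  ext i l
  by_cases hi : i = k
  · simp [hi, hk]
  · simp [Ne.symm hi]

lemma single_add_smul_single_sub_smul_single_add_sum [CommRing α] {i₀ k : n} (hk : k ≠ i₀)
    (c e : α) :
    single i₀ i₀ 1 + c • single k i₀ 1 - e • single k k 1
        + ∑ i ∈ Finset.univ.filter (fun i : n => i ≠ i₀ ∧ i ≠ k), single i i 1
      = 1 + single k i₀ c - single k k (1 + e) := by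
  rw [sum_filter_ne_ne_single_one hk.symm, smul_single, smul_single, single_add]
  simp only [smul_eq_mul, mul_one]
  abel

end

theorem psd_canonical_alignment_general (n : ℕ) [NeZero n]
    (k : Fin n) (hk : k ≠ 0)
    (d : Fin n → ℝ)
    (hdzero : ∀ i : Fin n, k ≤ i → d i = 0)
    (D : Matrix (Fin n) (Fin n) ℝ) (hD : D = Matrix.diagonal d)
    (a b : ℝ)
    (y : Fin n → ℝ)
    (hy : y = a • ((Pi.single 0 1 : Fin n → ℝ)) + b • ((Pi.single k 1 : Fin n → ℝ)))
    (A : Matrix (Fin n) (Fin n) ℝ)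
    (hA : A = Matrix.single 0 0 1
        + (d 0 * a * b) • Matrix.single k 0 1
        - (d 0 * a ^ 2) • Matrix.single k k 1
        + ∑ i ∈ Finset.univ.filter (fun i : Fin n => i ≠ 0 ∧ i ≠ k),
            Matrix.single i i 1) :
    Aᵀ * D * A = D ∧ A.mulVec y = a • ((Pi.single 0 1 : Fin n → ℝ)) := by
  rw [single_add_smul_single_sub_smul_single_add_sum hk] at hA
  have hdk : d k = 0 := hdzero k le_rfl
  subst hA hD
  constructor
  · refine transpose_mul_mul_eq_of_mul_eq (isSymm_diagonal d) ?_
    rw [Matrix.mul_sub, Matrix.mul_add, Matrix.mul_one, diagonal_mul_single_of_eq_zero hdk,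
      diagonal_mul_single_of_eq_zero hdk, add_zero, sub_zero]
  · have hy0 : y 0 = a := by simp [hy, hk.symm]
    have hyk : y k = b := by simp [hy, hk]
    rw [sub_mulVec, add_mulVec, one_mulVec, single_mulVec_eq, single_mulVec_eq, hy0, hyk, hy]
    module

theorem psd_canonical_alignment (n : ℕ) [NeZero n]
    (k : Fin n) (hk : k ≠ 0)
    (d : Fin n → ℝ) (hdpos : ∀ i : Fin n, i < k → 0 < d i)
    (hdzero : ∀ i : Fin n, k ≤ i → d i = 0)
    (D : Matrix (Fin n) (Fin n) ℝ) (hD : D = Matrix.diagonal d)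
    (a b : ℝ) (ha : a ≠ 0)
    (y : Fin n → ℝ)
    (hy : y = a • ((Pi.single 0 1 : Fin n → ℝ)) + b • ((Pi.single k 1 : Fin n → ℝ)))
    (A : Matrix (Fin n) (Fin n) ℝ)
    (hA : A = Matrix.single 0 0 1
        + (d 0 * a * b) • Matrix.single k 0 1
        - (d 0 * a ^ 2) • Matrix.single k k 1
        + ∑ i ∈ Finset.univ.filter (fun i : Fin n => i ≠ 0 ∧ i ≠ k),
            Matrix.single i i 1) :
    Aᵀ * D * A = D ∧ A.mulVec y = a • ((Pi.single 0 1 : Fin n → ℝ)) :=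
  psd_canonical_alignment_general n k hk d hdzero D hD a b y hy A hA
end

section
/- Let D = d_1 E_{1,1} − d_k E_{k,k} + (other terms), specifically D diagonal with D_{11} = d_1 > 0 and D_{kk} = −d_k < 0, and let x = a e_1 + b e_k with x^T D x = d_1 a^2 − d_k b^2 > 0. Then there exists an invertible matrix M with M^T D M = D and M x = α e_1, where α = √((d_1 a^2 − d_k b^2)/d_1). -/
/-!
On the plane spanned by `e₁` and `e_k` the form `D` is `diag(d₁, -d_k)`, and `x` has `D`-norm
`Q = d₁a² - d_k b² > 0`. A hyperbolic rotation of that plane carries `x` to `√(Q/d₁) e₁`, the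
vector on the positive `e₁`-axis with the same norm; extended by the identity on the remaining
coordinates it still preserves `D`, because `D` is diagonal.
-/

open Matrix

namespace Matrix

variable {ι κ μ R : Type*} [Fintype ι] [Fintype κ] [Fintype μ]

def embedBlock [Zero R] [One R] [DecidableEq μ] (e : κ ⊕ μ ≃ ι) (A : Matrix κ κ R) :
    Matrix ι ι R :=
  reindex e e (fromBlocks A 0 0 1)

variable [CommRing R] [DecidableEq μ] (e : κ ⊕ μ ≃ ι)

theorem isUnit_embedBlock [DecidableEq ι] [DecidableEq κ] {A : Matrix κ κ R} (hA : IsUnit A) :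
    IsUnit (embedBlock e A) := by
  rwa [isUnit_iff_isUnit_det, embedBlock, det_reindex_self, det_fromBlocks_zero₂₁, det_one,
    mul_one, ← isUnit_iff_isUnit_det]

theorem embedBlock_transpose_mul_diagonal_mul [DecidableEq ι] [DecidableEq κ]
    {A : Matrix κ κ R} {d : ι → R}
    (hA : Aᵀ * diagonal (d ∘ e ∘ Sum.inl) * A = diagonal (d ∘ e ∘ Sum.inl)) :
    (embedBlock e A)ᵀ * diagonal d * embedBlock e A = diagonal d := by
  have hd : diagonal d = reindex e e
      (fromBlocks (diagonal (d ∘ e ∘ Sum.inl)) 0 0 (diagonal (d ∘ e ∘ Sum.inr))) := by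
    rw [fromBlocks_diagonal, ← Sum.comp_elim, Sum.elim_comp_inl_inr, reindex_apply,
      submatrix_diagonal_equiv, Function.comp_assoc, Equiv.self_comp_symm, Function.comp_id]
  rw [hd, embedBlock, transpose_reindex, reindex_apply, reindex_apply, reindex_apply,
    submatrix_mul_equiv, submatrix_mul_equiv, fromBlocks_transpose, fromBlocks_multiply,
    fromBlocks_multiply]
  simp [hA]

theorem embedBlock_mulVec (A : Matrix κ κ R) (v : κ → R) :
    embedBlock e A *ᵥ (Sum.elim v 0 ∘ e.symm) = Sum.elim (A *ᵥ v) 0 ∘ e.symm := by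
  rw [embedBlock, reindex_apply, submatrix_mulVec_equiv, Equiv.symm_symm, Function.comp_assoc,
    Equiv.symm_comp_self, Function.comp_id, fromBlocks_mulVec]
  simp

end Matrix

theorem Equiv.sumElim_zero_comp_symm {ι κ μ R : Type*} [Fintype κ] [DecidableEq ι] [Semiring R]
    (e : κ ⊕ μ ≃ ι) (v : κ → R) :
    Sum.elim v 0 ∘ e.symm = ∑ c, v c • Pi.single (e (Sum.inl c)) 1 := by
  rw [Equiv.comp_symm_eq]
  classical
  ext (c | m) <;> simp [Finset.sum_apply, Pi.single_apply]

theorem exists_boost_fin_two (d₁ d₂ a b : ℝ) (hd₁ : 0 < d₁)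
    (hpos : 0 < d₁ * a ^ 2 - d₂ * b ^ 2) :
    ∃ A : Matrix (Fin 2) (Fin 2) ℝ, IsUnit A ∧
      Aᵀ * diagonal ![d₁, -d₂] * A = diagonal ![d₁, -d₂] ∧
      A *ᵥ ![a, b] = ![√((d₁ * a ^ 2 - d₂ * b ^ 2) / d₁), 0] := by
  -- With `Q = d₁a² - d₂b²`, `N = !![d₁a, -d₂b; -d₁b, d₁a]` satisfies `Nᵀ diag N = d₁Q • diag`
  -- and `N (a, b) = (Q, 0)`; the witness is `N / √(d₁Q)`.
  set c := (√d₁ * √(d₁ * a ^ 2 - d₂ * b ^ 2))⁻¹ with hc_def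
  have hc : c ^ 2 * (d₁ * (d₁ * a ^ 2 - d₂ * b ^ 2)) = 1 := by
    rw [hc_def, inv_pow, mul_pow, Real.sq_sqrt hd₁.le, Real.sq_sqrt hpos.le]
    exact inv_mul_cancel₀ (by positivity)
  have hcQ : c * (d₁ * a ^ 2 - d₂ * b ^ 2) = √((d₁ * a ^ 2 - d₂ * b ^ 2) / d₁) := by
    have hu : √d₁ ≠ 0 := (Real.sqrt_pos.2 hd₁).ne'
    have hβ : √(d₁ * a ^ 2 - d₂ * b ^ 2) ≠ 0 := (Real.sqrt_pos.2 hpos).ne'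
    rw [Real.sqrt_div hpos.le, hc_def]
    field_simp
    linear_combination -Real.sq_sqrt hpos.le
  refine ⟨c • !![d₁ * a, -(d₂ * b); -(d₁ * b), d₁ * a], ?_, ?_, ?_⟩
  · rw [isUnit_iff_isUnit_det, det_smul, det_fin_two_of, isUnit_iff_ne_zero, Fintype.card_fin]
    intro h
    exact one_ne_zero (by linear_combination h - hc)
  · ext i j
    fin_cases i <;> fin_cases j <;> simp [Matrix.mul_apply, Fin.sum_univ_two]
    · linear_combination d₁ * hc
    · ring
    · ring
    · linear_combination -d₂ * hc
  · ext i
    fin_cases i <;> simp [mulVec, dotProduct, Fin.sum_univ_two]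
    · linear_combination hcQ
    · ring

theorem indefinite_canonical_alignment_general (n : ℕ) [NeZero n]
    (k : Fin n) (hk : k ≠ 0)
    (d₁ dk : ℝ) (hd₁ : 0 < d₁)
    (D : Matrix (Fin n) (Fin n) ℝ) (hD : D.IsDiag)
    (hD1 : D 0 0 = d₁) (hDk : D k k = -dk)
    (a b : ℝ)
    (x : Fin n → ℝ)
    (hx : x = a • ((Pi.single 0 1 : Fin n → ℝ)) + b • ((Pi.single k 1 : Fin n → ℝ)))
    (hpos : d₁ * a ^ 2 - dk * b ^ 2 > 0) :
    ∃ M : Matrix (Fin n) (Fin n) ℝ,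
      IsUnit M ∧ Mᵀ * D * M = D ∧
      M.mulVec x = Real.sqrt ((d₁ * a ^ 2 - dk * b ^ 2) / d₁)
          • ((Pi.single 0 1 : Fin n → ℝ)) := by
  classical
  obtain ⟨A, hA_unit, hA_D, hA_x⟩ := exists_boost_fin_two d₁ dk a b hd₁ hpos
  have hf : Function.Injective ![0, k] := by
    intro i j
    fin_cases i <;> fin_cases j <;> simp [hk, hk.symm]
  let e := (Equiv.sumCongr (Equiv.ofInjective _ hf) (Equiv.refl _)).trans
    (Equiv.Set.sumCompl (Set.range ![0, k]))
  have he (c : Fin 2) : e (Sum.inl c) = ![0, k] c := rfl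
  have hDe : D.diag ∘ e ∘ Sum.inl = ![d₁, -dk] := by
    ext c
    fin_cases c <;> simp [he, hD1, hDk]
  refine ⟨embedBlock e A, isUnit_embedBlock e hA_unit, ?_, ?_⟩
  · rw [← hD.diagonal_diag]
    apply embedBlock_transpose_mul_diagonal_mul
    rwa [hDe]
  · have hxe : x = Sum.elim ![a, b] 0 ∘ e.symm := by
      simp [Equiv.sumElim_zero_comp_symm, Fin.sum_univ_two, he, hx]
    rw [hxe, embedBlock_mulVec, hA_x, Equiv.sumElim_zero_comp_symm]
    simp [Fin.sum_univ_two, he]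

theorem indefinite_canonical_alignment (n : ℕ) [NeZero n]
    (k : Fin n) (hk : k ≠ 0)
    (d₁ dk : ℝ) (hd₁ : 0 < d₁) (hdk : 0 < dk)
    (D : Matrix (Fin n) (Fin n) ℝ) (hD : D.IsDiag)
    (hD1 : D 0 0 = d₁) (hDk : D k k = -dk)
    (a b : ℝ)
    (x : Fin n → ℝ)
    (hx : x = a • ((Pi.single 0 1 : Fin n → ℝ)) + b • ((Pi.single k 1 : Fin n → ℝ)))
    (hpos : d₁ * a ^ 2 - dk * b ^ 2 > 0) :
    ∃ M : Matrix (Fin n) (Fin n) ℝ,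
      IsUnit M ∧ Mᵀ * D * M = D ∧
      M.mulVec x = Real.sqrt ((d₁ * a ^ 2 - dk * b ^ 2) / d₁)
          • ((Pi.single 0 1 : Fin n → ℝ)) :=
  indefinite_canonical_alignment_general n k hk d₁ dk hd₁ D hD hD1 hDk a b x hx hpos
end

section
/- Let A be a nonzero symmetric n×n real matrix and G = {U ∈ GL(n,R) : U^T A U = A}. If x, y ∈ R^n satisfy x^T A x = y^T A y ≠ 0, then there exists g ∈ G with g x = y. Consequently, the G-orbits on {x : x^T A x ≠ 0} are exactly the nonempty level sets {x : x^T A x = c} for c ≠ 0. -/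
/-!
The reflection `s_v u = u - (2 B(v, u) / Q(v)) v` in a vector with `Q(v) ≠ 0` is an involutive
isometry of `Q(u) = uᵀ A u`. If `Q(x) = Q(y) ≠ 0`, the parallelogram law
`Q(x - y) + Q(x + y) = 4 Q(x)` shows that `x - y` or `x + y` is anisotropic; in the first case
`s_{x-y}` maps `x` to `y`, in the second `-s_{x+y}` does. Conversely isometries preserve `Q`.
-/

open Matrix

namespace Matrix

variable {ι K : Type*} [Fintype ι] [Field K]

lemma IsSymm.dotProduct_mulVec_comm {A : Matrix ι ι K} (hA : A.IsSymm) (u w : ι → K) :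
    u ⬝ᵥ A *ᵥ w = w ⬝ᵥ A *ᵥ u := by
  rw [← dotProduct_transpose_mulVec, hA.eq]

lemma mulVec_dotProduct_mulVec_mulVec (A g : Matrix ι ι K) (u w : ι → K) :
    (g *ᵥ u) ⬝ᵥ A *ᵥ (g *ᵥ w) = u ⬝ᵥ (gᵀ * A * g) *ᵥ w := by
  rw [← mulVec_mulVec, ← mulVec_mulVec, dotProduct_transpose_mulVec, dotProduct_comm]

lemma sub_dotProduct_mulVec_sub {A : Matrix ι ι K} (hA : A.IsSymm) (x y : ι → K) :
    (x - y) ⬝ᵥ A *ᵥ (x - y) = x ⬝ᵥ A *ᵥ x - 2 * (x ⬝ᵥ A *ᵥ y) + y ⬝ᵥ A *ᵥ y := by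
  rw [mulVec_sub, dotProduct_sub, sub_dotProduct, sub_dotProduct, hA.dotProduct_mulVec_comm y x]
  ring

lemma add_dotProduct_mulVec_add {A : Matrix ι ι K} (hA : A.IsSymm) (x y : ι → K) :
    (x + y) ⬝ᵥ A *ᵥ (x + y) = x ⬝ᵥ A *ᵥ x + 2 * (x ⬝ᵥ A *ᵥ y) + y ⬝ᵥ A *ᵥ y := by
  rw [mulVec_add, dotProduct_add, add_dotProduct, add_dotProduct, hA.dotProduct_mulVec_comm y x]
  ring

variable [DecidableEq ι]

noncomputable def reflection (A : Matrix ι ι K) (v : ι → K) : Matrix ι ι K :=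
  1 - (2 / (v ⬝ᵥ A *ᵥ v)) • vecMulVec v (A *ᵥ v)

lemma reflection_mulVec (A : Matrix ι ι K) (v u : ι → K) :
    reflection A v *ᵥ u = u - (2 / (v ⬝ᵥ A *ᵥ v) * (A *ᵥ v ⬝ᵥ u)) • v := by
  rw [reflection, sub_mulVec, one_mulVec, smul_mulVec, vecMulVec_mulVec, op_smul_eq_smul,
    smul_smul]

lemma reflection_mul_self {A : Matrix ι ι K} {v : ι → K} (hv : v ⬝ᵥ A *ᵥ v ≠ 0) :
    reflection A v * reflection A v = 1 := by
  refine ext_iff_mulVec.2 fun u ↦ ?_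
  have hAv : A *ᵥ v ⬝ᵥ v = v ⬝ᵥ A *ᵥ v := dotProduct_comm _ _
  rw [← mulVec_mulVec, reflection_mulVec, reflection_mulVec, one_mulVec, dotProduct_sub,
    dotProduct_smul, hAv, smul_eq_mul]
  field_simp
  module

lemma isUnit_reflection {A : Matrix ι ι K} {v : ι → K} (hv : v ⬝ᵥ A *ᵥ v ≠ 0) :
    IsUnit (reflection A v) :=
  IsUnit.of_mul_eq_one _ (reflection_mul_self hv)

lemma transpose_reflection_mul {A : Matrix ι ι K} (hA : A.IsSymm) (v : ι → K) :
    (reflection A v)ᵀ * A = A * reflection A v := by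
  rw [reflection, transpose_sub, transpose_one, transpose_smul, transpose_vecMulVec, sub_mul,
    mul_sub, one_mul, mul_one, smul_mul, Matrix.mul_smul, vecMulVec_mul, mul_vecMulVec,
    ← vecMul_transpose, hA.eq]

lemma transpose_reflection_mul_mul_reflection {A : Matrix ι ι K} (hA : A.IsSymm) {v : ι → K}
    (hv : v ⬝ᵥ A *ᵥ v ≠ 0) : (reflection A v)ᵀ * A * reflection A v = A := by
  rw [transpose_reflection_mul hA, Matrix.mul_assoc, reflection_mul_self hv, mul_one]

lemma reflection_mulVec_eq_sub {A : Matrix ι ι K} (hA : A.IsSymm) {v x : ι → K}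
    (hv : v ⬝ᵥ A *ᵥ v ≠ 0) (hvx : 2 * (v ⬝ᵥ A *ᵥ x) = v ⬝ᵥ A *ᵥ v) :
    reflection A v *ᵥ x = x - v := by
  rw [reflection_mulVec, dotProduct_comm (A *ᵥ v), hA.dotProduct_mulVec_comm x,
    div_mul_eq_mul_div, hvx, div_self hv, one_smul]

lemma exists_isometry_mulVec_eq_of_dotProduct_mulVec_eq [NeZero (2 : K)] {A : Matrix ι ι K}
    (hA : A.IsSymm) {x y : ι → K} (hxy : x ⬝ᵥ A *ᵥ x = y ⬝ᵥ A *ᵥ y) (hx : x ⬝ᵥ A *ᵥ x ≠ 0) :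
    ∃ g : Matrix ι ι K, IsUnit g ∧ gᵀ * A * g = A ∧ g *ᵥ x = y := by
  have hsub := sub_dotProduct_mulVec_sub hA x y
  have hadd := add_dotProduct_mulVec_add hA x y
  have hyx : y ⬝ᵥ A *ᵥ x = x ⬝ᵥ A *ᵥ y := hA.dotProduct_mulVec_comm y x
  by_cases hm : (x - y) ⬝ᵥ A *ᵥ (x - y) = 0
  · have hp : (x + y) ⬝ᵥ A *ᵥ (x + y) ≠ 0 := by
      have h4 : (x + y) ⬝ᵥ A *ᵥ (x + y) = (2 * 2) * (x ⬝ᵥ A *ᵥ x) := by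
        linear_combination hadd + hsub - hm - 2 * hxy
      rw [h4]
      exact mul_ne_zero (mul_ne_zero two_ne_zero two_ne_zero) hx
    have hvx : 2 * ((x + y) ⬝ᵥ A *ᵥ x) = (x + y) ⬝ᵥ A *ᵥ (x + y) := by
      rw [add_dotProduct]
      linear_combination 2 * hyx - hadd + hxy
    refine ⟨-reflection A (x + y), (isUnit_reflection hp).neg, ?_, ?_⟩
    · rw [transpose_neg, neg_mul, neg_mul_neg]
      exact transpose_reflection_mul_mul_reflection hA hp
    · rw [neg_mulVec, reflection_mulVec_eq_sub hA hp hvx]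
      abel
  · have hvx : 2 * ((x - y) ⬝ᵥ A *ᵥ x) = (x - y) ⬝ᵥ A *ᵥ (x - y) := by
      rw [sub_dotProduct]
      linear_combination -2 * hyx - hsub + hxy
    refine ⟨reflection A (x - y), isUnit_reflection hm,
      transpose_reflection_mul_mul_reflection hA hm, ?_⟩
    rw [reflection_mulVec_eq_sub hA hm hvx, sub_sub_cancel]

end Matrix

theorem orbit_space_quadratic_form_general (n : ℕ)
    (A : Matrix (Fin n) (Fin n) ℝ) (hA : A.IsSymm) :
    (∀ x y : Fin n → ℝ, x ⬝ᵥ A.mulVec x = y ⬝ᵥ A.mulVec y →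
        x ⬝ᵥ A.mulVec x ≠ 0 →
        ∃ g : Matrix (Fin n) (Fin n) ℝ,
          IsUnit g ∧ gᵀ * A * g = A ∧ g.mulVec x = y) ∧
    (∀ x : Fin n → ℝ, x ⬝ᵥ A.mulVec x ≠ 0 →
      {y : Fin n → ℝ | ∃ g : Matrix (Fin n) (Fin n) ℝ,
          IsUnit g ∧ gᵀ * A * g = A ∧ g.mulVec x = y}
        = {y : Fin n → ℝ | y ⬝ᵥ A.mulVec y = x ⬝ᵥ A.mulVec x}) := by
  refine ⟨fun x y hxy hx ↦ exists_isometry_mulVec_eq_of_dotProduct_mulVec_eq hA hxy hx,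
    fun x hx ↦ Set.ext fun y ↦ ⟨?_, fun hy ↦ ?_⟩⟩
  · rintro ⟨g, -, hg, rfl⟩
    rw [Set.mem_ofPred_eq, mulVec_dotProduct_mulVec_mulVec, hg]
  · exact exists_isometry_mulVec_eq_of_dotProduct_mulVec_eq hA hy.symm hx

theorem orbit_space_quadratic_form (n : ℕ)
    (A : Matrix (Fin n) (Fin n) ℝ) (hA0 : A ≠ 0) (hA : A.IsSymm) :
    (∀ x y : Fin n → ℝ, x ⬝ᵥ A.mulVec x = y ⬝ᵥ A.mulVec y →
        x ⬝ᵥ A.mulVec x ≠ 0 →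
        ∃ g : Matrix (Fin n) (Fin n) ℝ,
          IsUnit g ∧ gᵀ * A * g = A ∧ g.mulVec x = y) ∧
    (∀ x : Fin n → ℝ, x ⬝ᵥ A.mulVec x ≠ 0 →
      {y : Fin n → ℝ | ∃ g : Matrix (Fin n) (Fin n) ℝ,
          IsUnit g ∧ gᵀ * A * g = A ∧ g.mulVec x = y}
        = {y : Fin n → ℝ | y ⬝ᵥ A.mulVec y = x ⬝ᵥ A.mulVec x}) :=
  orbit_space_quadratic_form_general n A hA
end

section
/- If A is a symmetric n×n real matrix that is neither positive semidefinite nor negative semidefinite (indefinite), then the map x ↦ sign(x^T A x)√|x^T A x| is continuous on R^n but fails to be differentiable at some nonzero point of the null cone {x : x^T A x = 0}. -/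
/-!
Write `normA A = signedSqrt ∘ Q` with `signedSqrt t = sign t * √|t|`, which is continuous, and
`Q x = xᵀ A x`. A quadratic form taking both signs has a nonzero isotropic vector `x`, found by
the intermediate value theorem on a segment. If `signedSqrt ∘ Q` were differentiable at `x`, then
`Q = f * |f|` with `f = signedSqrt ∘ Q` vanishing at `x` would have derivative `0` there, so the
polar form `polar Q x` would vanish. Then along any line `x + s • u` with `Q u ≠ 0` we get
`signedSqrt (Q (x + s • u)) = |s| * signedSqrt (Q u)`, which is not differentiable at `s = 0`.
-/

open Matrix

noncomputable def normA {n : ℕ} (A : Matrix (Fin n) (Fin n) ℝ) (x : Fin n → ℝ) : ℝ :=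
  Real.sign (x ⬝ᵥ A.mulVec x) * Real.sqrt |x ⬝ᵥ A.mulVec x|

open Asymptotics

noncomputable def signedSqrt (t : ℝ) : ℝ := Real.sign t * √|t|

lemma signedSqrt_eq_sqrt_sub_sqrt_neg (t : ℝ) : signedSqrt t = √t - √(-t) := by
  rcases lt_trichotomy t 0 with h | rfl | h
  · simp [signedSqrt, Real.sign_of_neg h, abs_of_neg h, Real.sqrt_eq_zero'.2 h.le]
  · simp [signedSqrt]
  · simp [signedSqrt, Real.sign_of_pos h, abs_of_pos h, Real.sqrt_eq_zero'.2 (neg_nonpos.2 h.le)]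

lemma continuous_signedSqrt : Continuous signedSqrt := by
  simp_rw [funext signedSqrt_eq_sqrt_sub_sqrt_neg]
  fun_prop

lemma signedSqrt_mul_abs_self (t : ℝ) : signedSqrt t * |signedSqrt t| = t := by
  rcases lt_trichotomy t 0 with h | rfl | h
  · simp [signedSqrt, Real.sign_of_neg h, abs_of_neg h,
      abs_of_nonneg (Real.sqrt_nonneg _), Real.mul_self_sqrt (neg_nonneg.2 h.le)]
  · simp [signedSqrt]
  · simp [signedSqrt, Real.sign_of_pos h, abs_of_pos h,
      abs_of_nonneg (Real.sqrt_nonneg _), Real.mul_self_sqrt h.le]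

lemma signedSqrt_sq_mul (s t : ℝ) : signedSqrt (s ^ 2 * t) = |s| * signedSqrt t := by
  simp only [signedSqrt_eq_sqrt_sub_sqrt_neg, ← mul_neg, Real.sqrt_mul (sq_nonneg s),
    Real.sqrt_sq_eq_abs, mul_sub]

lemma signedSqrt_ne_zero {t : ℝ} (ht : t ≠ 0) : signedSqrt t ≠ 0 := by
  intro h
  rw [← signedSqrt_mul_abs_self t, h, zero_mul] at ht
  exact ht rfl

lemma hasFDerivAt_mul_abs_self_of_eq_zero {E : Type*} [NormedAddCommGroup E] [NormedSpace ℝ E]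
    {f : E → ℝ} {x : E} (hf : DifferentiableAt ℝ f x) (hx : f x = 0) :
    HasFDerivAt (fun y => f y * |f y|) (0 : E →L[ℝ] ℝ) x := by
  have hO : f =O[nhds x] fun y => ‖y - x‖ := by simpa [hx] using hf.isBigO_sub.norm_right
  have ho : (fun y => |f y|) =o[nhds x] fun _ => (1 : ℝ) :=
    (isLittleO_one_iff ℝ).2 (by simpa [hx] using hf.continuousAt.abs.tendsto)
  rw [hasFDerivAt_iff_isLittleO]
  simpa [hx] using (hO.mul_isLittleO ho).norm_right

namespace QuadraticMap

section CommRing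

variable {R M : Type*} [CommRing R] [AddCommGroup M] [Module R M] (Q : QuadraticForm R M)

lemma map_smul_add_smul (a b : R) (x y : M) :
    Q (a • x + b • y) = a ^ 2 * Q x + a * b * polar Q x y + b ^ 2 * Q y := by
  rw [QuadraticMap.map_add ⇑Q, Q.map_smul, Q.map_smul, polar_smul_left, polar_smul_right]
  simp only [smul_eq_mul]
  ring

lemma map_add_smul (x y : M) (b : R) :
    Q (x + b • y) = Q x + b * polar Q x y + b ^ 2 * Q y := by
  simpa using Q.map_smul_add_smul 1 b x y

end CommRing

section Real

variable {E : Type*} [AddCommGroup E] [Module ℝ E] (Q : QuadraticForm ℝ E)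

lemma exists_ne_zero_eq_zero_of_pos_of_neg {u v : E} (hu : 0 < Q u) (hv : Q v < 0) :
    ∃ x ≠ 0, Q x = 0 := by
  have hcont : Continuous fun t : ℝ => Q ((1 - t) • u + t • v) := by
    simp_rw [map_smul_add_smul]
    fun_prop
  obtain ⟨t, -, ht⟩ := intermediate_value_Icc' zero_le_one hcont.continuousOn
    ⟨by simpa using hv.le, by simpa using hu.le⟩
  refine ⟨(1 - t) • u + t • v, fun h => ?_, ht⟩
  -- on the segment, `0 = (1 - t) • u + t • v` would force `(1 - t)² Q u = t² Q v` with opposite signs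
  have hQ : (1 - t) * (1 - t) * Q u = t * t * Q v := by
    simpa [Q.map_smul] using congrArg Q (eq_neg_of_add_eq_zero_left h)
  have h1 : (1 - t) * (1 - t) * Q u = 0 := by
    nlinarith [mul_nonneg (mul_self_nonneg (1 - t)) hu.le,
      mul_nonneg (mul_self_nonneg t) (neg_nonneg.2 hv.le)]
  have h2 : t * t * Q v = 0 := hQ ▸ h1
  simp only [mul_eq_zero, hu.ne', hv.ne, or_false, or_self, sub_eq_zero] at h1 h2
  linarith

end Real

section Normed

variable {E : Type*} [NormedAddCommGroup E] [NormedSpace ℝ E] {Q : QuadraticForm ℝ E} {x : E}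

lemma polar_eq_zero_of_differentiableAt_signedSqrt (hx : Q x = 0)
    (h : DifferentiableAt ℝ (fun y => signedSqrt (Q y)) x) (d : E) : polar Q x d = 0 := by
  have hQ : HasFDerivAt Q (0 : E →L[ℝ] ℝ) x := by
    simpa only [signedSqrt_mul_abs_self] using
      hasFDerivAt_mul_abs_self_of_eq_zero h (by simp [hx, signedSqrt])
  have hline : HasDerivAt (fun s : ℝ => x + s • d) d 0 := by
    simpa using ((hasDerivAt_id (0 : ℝ)).smul_const d).const_add x
  have hzero : HasDerivAt (fun s : ℝ => Q (x + s • d)) 0 0 :=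
    (hQ.comp_hasDerivAt_of_eq 0 hline (by simp)).congr_deriv rfl
  have hpoly : HasDerivAt (fun s : ℝ => s * polar Q x d + s ^ 2 * Q d) (polar Q x d) 0 :=
    (((hasDerivAt_id' 0).mul_const _).add ((hasDerivAt_pow 2 0).mul_const _)).congr_deriv
      (by simp)
  simp_rw [map_add_smul, hx, zero_add] at hzero
  exact hpoly.unique hzero

theorem not_differentiableAt_signedSqrt_of_eq_zero {u : E} (hx : Q x = 0) (hu : Q u ≠ 0) :
    ¬ DifferentiableAt ℝ (fun y => signedSqrt (Q y)) x := by
  intro h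
  have hpolar := polar_eq_zero_of_differentiableAt_signedSqrt hx h
  have hline : (fun s : ℝ => signedSqrt (Q (x + s • u))) = fun s => signedSqrt (Q u) * |s| := by
    funext s
    rw [map_add_smul, hx, hpolar, mul_zero, zero_add, zero_add, signedSqrt_sq_mul, mul_comm]
  have habs : DifferentiableAt ℝ (fun s : ℝ => signedSqrt (Q u) * |s|) 0 := by
    rw [← hline]
    exact DifferentiableAt.comp (𝕜 := ℝ) (g := fun y => signedSqrt (Q y)) (0 : ℝ)
      (by simpa using h) (by fun_prop)
  exact not_differentiableAt_abs_zero <| by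
    simpa [signedSqrt_ne_zero hu] using habs.const_mul (signedSqrt (Q u))⁻¹

end Normed

end QuadraticMap

lemma Matrix.toQuadraticForm'_apply {R ι : Type*} [CommRing R] [Fintype ι] [DecidableEq ι]
    (A : Matrix ι ι R) (x : ι → R) : A.toQuadraticForm' x = x ⬝ᵥ A *ᵥ x := by
  simp [toQuadraticForm', toLinearMap₂'_apply']

theorem indefinite_norm_continuous_not_differentiable_general (n : ℕ)
    (A : Matrix (Fin n) (Fin n) ℝ)
    (hpos : ∃ x : Fin n → ℝ, 0 < x ⬝ᵥ A.mulVec x)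
    (hneg : ∃ x : Fin n → ℝ, x ⬝ᵥ A.mulVec x < 0) :
    Continuous (fun x : Fin n → ℝ => normA A x) ∧
    ∃ x : Fin n → ℝ, x ≠ 0 ∧ x ⬝ᵥ A.mulVec x = 0 ∧
      ¬ DifferentiableAt ℝ (fun y : Fin n → ℝ => normA A y) x := by
  set Q := A.toQuadraticForm'
  have hnormA : (fun x => normA A x) = fun x => signedSqrt (Q x) := by
    simp only [Q, toQuadraticForm'_apply]
    rfl
  obtain ⟨u, hu⟩ := hpos
  obtain ⟨v, hv⟩ := hneg
  rw [← toQuadraticForm'_apply] at hu hv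
  obtain ⟨x, hx0, hx⟩ := Q.exists_ne_zero_eq_zero_of_pos_of_neg hu hv
  refine ⟨?_, x, hx0, toQuadraticForm'_apply A x ▸ hx, ?_⟩
  · exact continuous_signedSqrt.comp
      (continuous_id.dotProduct (continuous_const.matrix_mulVec continuous_id))
  · rw [hnormA]
    exact QuadraticMap.not_differentiableAt_signedSqrt_of_eq_zero hx hu.ne'

theorem indefinite_norm_continuous_not_differentiable (n : ℕ)
    (A : Matrix (Fin n) (Fin n) ℝ) (hA : A.IsSymm)
    (hpos : ∃ x : Fin n → ℝ, 0 < x ⬝ᵥ A.mulVec x)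
    (hneg : ∃ x : Fin n → ℝ, x ⬝ᵥ A.mulVec x < 0) :
    Continuous (fun x : Fin n → ℝ => normA A x) ∧
    ∃ x : Fin n → ℝ, x ≠ 0 ∧ x ⬝ᵥ A.mulVec x = 0 ∧
      ¬ DifferentiableAt ℝ (fun y : Fin n → ℝ => normA A y) x :=
  indefinite_norm_continuous_not_differentiable_general n A hpos hneg
end
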